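/- arXiv:2112.09982 — 4 statements merged into one kernel-verified Lean document; each statement's English description precedes it below -/
import Mathlib

section
/- Let (X,d) be a metric space with at least two elements and (A,(p_l)) a commutative Frechet algebra. Then Lip_d(X,A) is semisimple (i.e., ⋂_{ψ∈Δ(Lip_d(X,A))} ker ψ = {0}) if and only if A is semisimple (i.e., ⋂_{φ∈Δ(A)} ker φ = {0}). -/
open Filter Topology BigOperators

namespace BSE

variable {A : Type*} [NonUnitalCommRing A] [Module ℂ A]

/-- The defining properties of an increasing sequence of submultiplicative seminorms
on a commutative algebra over `ℂ`. -/
structure IsSeminormFamily (p : ℕ → A → ℝ) : Prop where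
  nonneg : ∀ l a, 0 ≤ p l a
  map_zero : ∀ l, p l 0 = 0
  add_le : ∀ l a b, p l (a + b) ≤ p l a + p l b
  smul_eq : ∀ (l : ℕ) (c : ℂ) (a : A), p l (c • a) = ‖c‖ * p l a
  submul : ∀ l a b, p l (a * b) ≤ p l a * p l b
  mono : ∀ l a, p l a ≤ p (l + 1) a

/-- `(A, p)` is a (commutative) Frechet algebra: an increasing sequence of submultiplicative
seminorms which is separating (Hausdorff) and for which `A` is complete. -/
structure IsFrechetAlgebra (p : ℕ → A → ℝ) extends IsSeminormFamily p : Prop where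
  separates : ∀ a : A, (∀ l, p l a = 0) → a = 0
  complete : ∀ u : ℕ → A,
    (∀ (l : ℕ) (ε : ℝ), 0 < ε → ∃ N : ℕ, ∀ m ≥ N, ∀ n ≥ N, p l (u m - u n) ≤ ε) →
    ∃ a : A, ∀ (l : ℕ) (ε : ℝ), 0 < ε → ∃ N : ℕ, ∀ n ≥ N, p l (u n - a) ≤ ε

/-- A character: a nonzero continuous multiplicative linear functional.  Continuity with
respect to an increasing sequence of seminorms means being dominated by a multiple of one
of the seminorms. -/
def IsChar (p : ℕ → A → ℝ) (φ : A → ℂ) : Prop :=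
  (∀ a b, φ (a + b) = φ a + φ b) ∧
  (∀ (c : ℂ) (a : A), φ (c • a) = c * φ a) ∧
  (∀ a b, φ (a * b) = φ a * φ b) ∧
  φ ≠ 0 ∧
  ∃ (l : ℕ) (C : ℝ), ∀ a, ‖φ a‖ ≤ C * p l a

/-- The character space `Δ(A)`, topologized by pointwise (Gelfand) convergence. -/
def charSpace (p : ℕ → A → ℝ) : Type _ := {φ : A → ℂ // IsChar p φ}

noncomputable instance (p : ℕ → A → ℝ) : TopologicalSpace (charSpace p) :=
  inferInstanceAs (TopologicalSpace {φ : A → ℂ // IsChar p φ})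

/-- Semisimplicity: the characters separate the points (`⋂ ker φ = {0}`). -/
def IsSemisimple (p : ℕ → A → ℝ) : Prop :=
  ∀ a : A, (∀ φ : charSpace p, φ.1 a = 0) → a = 0

/-- A (von Neumann) bounded subset: every seminorm is bounded on it. -/
def IsBoundedSet (p : ℕ → A → ℝ) (M : Set A) : Prop :=
  ∀ l, ∃ C : ℝ, ∀ a ∈ M, p l a ≤ C

/-- `P_M(F) = sup { |F a| : a ∈ M }`. -/
noncomputable def PM {α : Type*} (M : Set α) (F : α → ℂ) : ℝ :=
  sSup {r : ℝ | ∃ a ∈ M, r = ‖F a‖}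

/-- A BSE function: a bounded continuous function on the character space satisfying the
Bochner–Schoenberg–Eberlein inequality with respect to some bounded subset of `A`. -/
def IsBSE (p : ℕ → A → ℝ) (σ : charSpace p → ℂ) : Prop :=
  Continuous σ ∧ (∃ C : ℝ, ∀ φ, ‖σ φ‖ ≤ C) ∧
  ∃ M : Set A, IsBoundedSet p M ∧ ∃ β : ℝ, 0 < β ∧
    ∀ (n : ℕ) (c : Fin n → ℂ) (φ : Fin n → charSpace p),
      ‖∑ i, c i * σ (φ i)‖ ≤ β * PM M (fun a => ∑ i, c i * (φ i).1 a)

/-- The `l`-th BSE seminorm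
`q_l(σ) = sup { |∑ cᵢ σ(φᵢ)| : P_{M_l}(∑ cᵢ φᵢ) ≤ 1 }`, with `M_l` the unit ball of `p l`. -/
noncomputable def bseSeminorm (p : ℕ → A → ℝ) (l : ℕ) (σ : charSpace p → ℂ) : ℝ :=
  sSup {r : ℝ | ∃ (n : ℕ) (c : Fin n → ℂ) (φ : Fin n → charSpace p),
    PM {a : A | p l a ≤ 1} (fun a => ∑ i, c i * (φ i).1 a) ≤ 1 ∧
    r = ‖∑ i, c i * σ (φ i)‖}

/-- A multiplier: a linear map `T : A → A` with `T(ab) = a T(b)`. -/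
def IsMultiplier (T : A → A) : Prop :=
  (∀ a b, T (a + b) = T a + T b) ∧
  (∀ (c : ℂ) (a : A), T (c • a) = c • T a) ∧
  (∀ a b : A, T (a * b) = a * T b)

/-- `σ` is the Helgason–Wang transform `T̂` of the multiplier `T`:
`φ(T a) = σ(φ) φ(a)` for all `a`, `φ`. -/
def IsHatOf (p : ℕ → A → ℝ) (T : A → A) (σ : charSpace p → ℂ) : Prop :=
  ∀ (a : A) (φ : charSpace p), φ.1 (T a) = σ φ * φ.1 a

/-- `A` is a BSE (Frechet) algebra: `M(A)^ = C_BSE(Δ(A))`. -/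
def IsBSEAlgebra (p : ℕ → A → ℝ) : Prop :=
  (∀ (T : A → A) (σ : charSpace p → ℂ), IsMultiplier T → IsHatOf p T σ → IsBSE p σ) ∧
  (∀ σ : charSpace p → ℂ, IsBSE p σ → ∃ T : A → A, IsMultiplier T ∧ IsHatOf p T σ)

/-- A bounded Δ-weak approximate identity: a bounded net `(e_i)` (indexed by a directed set)
with `φ(e_i) → 1` for every character `φ`. -/
def HasBddDeltaWeakApproxId (p : ℕ → A → ℝ) : Prop :=
  ∃ (ι : Type) (r : ι → ι → Prop) (e : ι → A),
    Nonempty ι ∧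
    (∀ i j : ι, ∃ k, r i k ∧ r j k) ∧
    (∀ l, ∃ C : ℝ, ∀ i, p l (e i) ≤ C) ∧
    ∀ φ : charSpace p, ∀ ε : ℝ, 0 < ε → ∃ i₀, ∀ i, r i₀ i → ‖φ.1 (e i) - 1‖ ≤ ε

/-- `A` is without order: `a·A = 0` implies `a = 0`. -/
def IsWithoutOrder (B : Type*) [NonUnitalCommRing B] : Prop :=
  ∀ a : B, (∀ b : B, a * b = 0) → a = 0

section Lip

variable {X : Type*} [MetricSpace X] {E : Type*} [AddCommGroup E]

/-- Membership in the vector-valued Lipschitz algebra: for every `l` the function is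
bounded and Lipschitz with respect to the seminorm `s l`. -/
def MemLip (s : ℕ → E → ℝ) (f : X → E) : Prop :=
  ∀ l, (∃ C : ℝ, ∀ x, s l (f x) ≤ C) ∧ (∃ C : ℝ, ∀ x y, s l (f x - f y) ≤ C * dist x y)

/-- `q_{l}(f) = sup_x s_l (f x)`. -/
noncomputable def lipQ (s : ℕ → E → ℝ) (l : ℕ) (f : X → E) : ℝ :=
  sSup {r : ℝ | ∃ x : X, r = s l (f x)}

/-- `p_{l}(f) = sup_{x ≠ y} s_l (f x - f y) / d(x,y)`. -/
noncomputable def lipP (s : ℕ → E → ℝ) (l : ℕ) (f : X → E) : ℝ :=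
  sSup {r : ℝ | ∃ x y : X, x ≠ y ∧ r = s l (f x - f y) / dist x y}

/-- `r_l = q_l + p_l`, the Lipschitz algebra seminorms. -/
noncomputable def lipR (s : ℕ → E → ℝ) (l : ℕ) (f : X → E) : ℝ :=
  lipQ s l f + lipP s l f

end Lip

section LipAlg

variable (X : Type*) [MetricSpace X] (p : ℕ → A → ℝ)

/-- The vector-valued Frechet Lipschitz algebra `Lip_d(X, A)` as a (non-unital)
subalgebra of `X → A`. -/
def lipSubalgebra (hp : IsSeminormFamily p) : NonUnitalSubalgebra ℂ (X → A) where
  carrier := {f | MemLip p f}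
  zero_mem' := by
    intro l
    refine ⟨⟨0, fun x => ?_⟩, ⟨0, fun x y => ?_⟩⟩
    · simp [hp.map_zero l]
    · simp [hp.map_zero l]
  add_mem' := by
    intro f g hf hg l
    obtain ⟨⟨Cf, hCf⟩, ⟨Lf, hLf⟩⟩ := hf l
    obtain ⟨⟨Cg, hCg⟩, ⟨Lg, hLg⟩⟩ := hg l
    refine ⟨⟨Cf + Cg, fun x => ?_⟩, ⟨Lf + Lg, fun x y => ?_⟩⟩
    · exact le_trans (hp.add_le l _ _) (add_le_add (hCf x) (hCg x))
    · have key : (f + g) x - (f + g) y = (f x - f y) + (g x - g y) := by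
        simp only [Pi.add_apply]; abel
      calc p l ((f + g) x - (f + g) y) = p l ((f x - f y) + (g x - g y)) := by rw [key]
        _ ≤ p l (f x - f y) + p l (g x - g y) := hp.add_le l _ _
        _ ≤ Lf * dist x y + Lg * dist x y := add_le_add (hLf x y) (hLg x y)
        _ = (Lf + Lg) * dist x y := by ring
  mul_mem' := by
    intro f g hf hg l
    obtain ⟨⟨Cf, hCf⟩, ⟨Lf, hLf⟩⟩ := hf l
    obtain ⟨⟨Cg, hCg⟩, ⟨Lg, hLg⟩⟩ := hg l
    have hCf' : ∀ x, p l (f x) ≤ max Cf 0 := fun x => le_trans (hCf x) (le_max_left _ _)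
    have hCg' : ∀ x, p l (g x) ≤ max Cg 0 := fun x => le_trans (hCg x) (le_max_left _ _)
    have hLf' : ∀ x y, p l (f x - f y) ≤ max Lf 0 * dist x y := fun x y =>
      le_trans (hLf x y) (mul_le_mul_of_nonneg_right (le_max_left _ _) dist_nonneg)
    have hLg' : ∀ x y, p l (g x - g y) ≤ max Lg 0 * dist x y := fun x y =>
      le_trans (hLg x y) (mul_le_mul_of_nonneg_right (le_max_left _ _) dist_nonneg)
    refine ⟨⟨max Cf 0 * max Cg 0, fun x => ?_⟩,
      ⟨max Cf 0 * max Lg 0 + max Lf 0 * max Cg 0, fun x y => ?_⟩⟩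
    · calc p l ((f * g) x) = p l (f x * g x) := rfl
        _ ≤ p l (f x) * p l (g x) := hp.submul l _ _
        _ ≤ max Cf 0 * max Cg 0 :=
          mul_le_mul (hCf' x) (hCg' x) (hp.nonneg l _) (le_max_right _ _)
    · have key : f x * g x - f y * g y = f x * (g x - g y) + (f x - f y) * g y := by
        rw [mul_sub, sub_mul]; abel
      calc p l ((f * g) x - (f * g) y) = p l (f x * g x - f y * g y) := rfl
        _ = p l (f x * (g x - g y) + (f x - f y) * g y) := by rw [key]
        _ ≤ p l (f x * (g x - g y)) + p l ((f x - f y) * g y) := hp.add_le l _ _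
        _ ≤ p l (f x) * p l (g x - g y) + p l (f x - f y) * p l (g y) :=
            add_le_add (hp.submul l _ _) (hp.submul l _ _)
        _ ≤ max Cf 0 * (max Lg 0 * dist x y) + (max Lf 0 * dist x y) * max Cg 0 :=
            add_le_add
              (mul_le_mul (hCf' x) (hLg' x y) (hp.nonneg l _) (le_max_right _ _))
              (mul_le_mul (hLf' x y) (hCg' y) (hp.nonneg l _)
                (mul_nonneg (le_max_right _ _) dist_nonneg))
        _ = (max Cf 0 * max Lg 0 + max Lf 0 * max Cg 0) * dist x y := by ring
  smul_mem' := by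
    intro c f hf l
    obtain ⟨⟨Cf, hCf⟩, ⟨Lf, hLf⟩⟩ := hf l
    refine ⟨⟨‖c‖ * max Cf 0, fun x => ?_⟩, ⟨‖c‖ * max Lf 0, fun x y => ?_⟩⟩
    · calc p l ((c • f) x) = ‖c‖ * p l (f x) := hp.smul_eq l c (f x)
        _ ≤ ‖c‖ * max Cf 0 :=
          mul_le_mul_of_nonneg_left (le_trans (hCf x) (le_max_left _ _)) (norm_nonneg c)
    · have key : (c • f) x - (c • f) y = c • (f x - f y) := by
        simp only [Pi.smul_apply]; rw [smul_sub]
      calc p l ((c • f) x - (c • f) y) = ‖c‖ * p l (f x - f y) := by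
            rw [key, hp.smul_eq l c _]
        _ ≤ ‖c‖ * (max Lf 0 * dist x y) :=
          mul_le_mul_of_nonneg_left
            (le_trans (hLf x y) (mul_le_mul_of_nonneg_right (le_max_left _ _) dist_nonneg))
            (norm_nonneg c)
        _ = ‖c‖ * max Lf 0 * dist x y := by ring

theorem memLip_of_mem {hp : IsSeminormFamily p} {f : X → A}
    (hf : f ∈ lipSubalgebra X p hp) : MemLip p f := hf

/-- The canonical sequence of seminorms `r_{l,A}` on `Lip_d(X,A)`. -/
noncomputable def lipFam (hp : IsSeminormFamily p) :
    ℕ → ↥(lipSubalgebra X p hp) → ℝ :=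
  fun l f => lipR p l (f : X → A)

/-- The constant function `f_a ∈ Lip_d(X, A)`. -/
def constLip (hp : IsSeminormFamily p) (a : A) : ↥(lipSubalgebra X p hp) :=
  ⟨fun _ => a, by
    show MemLip p (fun _ : X => a)
    intro l
    refine ⟨⟨p l a, fun _ => le_rfl⟩, ⟨0, fun x y => by simp [hp.map_zero l]⟩⟩⟩

/-- The character `x ⊗ φ : f ↦ φ(f(x))` of `Lip_d(X, A)`. -/
noncomputable def tensorChar (hp : IsSeminormFamily p) (x : X) (φ : charSpace p) :
    charSpace (lipFam X p hp) := by
  refine ⟨fun f => φ.1 ((f : X → A) x), ?_, ?_, ?_, ?_, ?_⟩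
  · intro f g; exact φ.2.1 _ _
  · intro c f; exact φ.2.2.1 _ _
  · intro f g; exact φ.2.2.2.1 _ _
  · -- nonzero
    obtain ⟨a, ha⟩ := Function.ne_iff.mp φ.2.2.2.2.1
    intro h
    have := congrFun h (constLip X p hp a)
    simp only [Pi.zero_apply] at this ha
    exact ha this
  · -- continuity
    obtain ⟨l, C, hC⟩ := φ.2.2.2.2.2
    refine ⟨l, max C 0, fun f => ?_⟩
    have h1 : ‖φ.1 ((f : X → A) x)‖ ≤ max C 0 * p l ((f : X → A) x) :=
      le_trans (hC _) (mul_le_mul_of_nonneg_right (le_max_left _ _) (hp.nonneg l _))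
    have hb : ∃ Cb : ℝ, ∀ y : X, p l ((f : X → A) y) ≤ Cb := (f.2 l).1
    obtain ⟨Cb, hCb⟩ := hb
    have h2 : p l ((f : X → A) x) ≤ lipQ p l (f : X → A) := by
      apply le_csSup
      · exact ⟨Cb, by rintro r ⟨y, rfl⟩; exact hCb y⟩
      · exact ⟨x, rfl⟩
    have h3 : (0 : ℝ) ≤ lipP p l (f : X → A) := by
      apply Real.sSup_nonneg
      rintro r ⟨y, z, _, rfl⟩
      exact div_nonneg (hp.nonneg l _) dist_nonneg
    have h4 : lipQ p l (f : X → A) ≤ lipFam X p hp l f := by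
      simp only [lipFam, lipR]; linarith
    calc ‖φ.1 ((f : X → A) x)‖ ≤ max C 0 * p l ((f : X → A) x) := h1
      _ ≤ max C 0 * lipFam X p hp l f :=
        mul_le_mul_of_nonneg_left (le_trans h2 h4) (le_max_right _ _)

end LipAlg

/-- The seminorms `q'_l(T) = sup { p_l(T a) : p_l a ≤ 1 }` on the multiplier algebra. -/
noncomputable def multSem (p : ℕ → A → ℝ) (l : ℕ) (T : A → A) : ℝ :=
  sSup {r : ℝ | ∃ a : A, p l a ≤ 1 ∧ r = p l (T a)}

end BSE

open BSE in
/-- `Lip_d(X,A)` is semisimple iff `A` is semisimple. -/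
theorem lip_isSemisimple_iff
    {X : Type*} [MetricSpace X] (hX : ∃ x y : X, x ≠ y)
    {A : Type*} [NonUnitalCommRing A] [Module ℂ A] [SMulCommClass ℂ A A] [IsScalarTower ℂ A A]
    (p : ℕ → A → ℝ) (hp : IsFrechetAlgebra p) :
    IsSemisimple (lipFam X p hp.toIsSeminormFamily) ↔ IsSemisimple p := by
  obtain ⟨x₀, y₀, hxy⟩ := hX
  set hp' := hp.toIsSeminormFamily with hhp'
  have hconst : ∀ (b : A) (l : ℕ), lipFam X p hp' l (constLip X p hp' b) = p l b := by
    intro b l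
    have hQ : lipQ p l ((constLip X p hp' b : ↥(lipSubalgebra X p hp')) : X → A) = p l b := by
      have : {r : ℝ | ∃ x : X, r = p l (((constLip X p hp' b) : X → A) x)} = {p l b} := by
        ext r
        constructor
        · rintro ⟨x, rfl⟩; rfl
        · rintro rfl; exact ⟨x₀, rfl⟩
      rw [lipQ, this, csSup_singleton]
    have hP : lipP p l ((constLip X p hp' b : ↥(lipSubalgebra X p hp')) : X → A) = 0 := by
      have : {r : ℝ | ∃ x y : X, x ≠ y ∧
          r = p l (((constLip X p hp' b) : X → A) x - ((constLip X p hp' b) : X → A) y)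
            / dist x y} = {(0 : ℝ)} := by
        ext r
        constructor
        · rintro ⟨x, y, hxy', rfl⟩
          simp [constLip, sub_self, hp'.map_zero l]
        · rintro rfl
          exact ⟨x₀, y₀, hxy, by simp [constLip, sub_self, hp'.map_zero l]⟩
      rw [lipP, this, csSup_singleton]
    show lipR p l _ = p l b
    rw [lipR, hQ, hP, add_zero]
  constructor
  · -- Lip semisimple → A semisimple
    intro hss a ha
    have hzero : ∀ ψ : charSpace (lipFam X p hp'), ψ.1 (constLip X p hp' a) = 0 := by
      intro ψ
      set Φ : A → ℂ := fun b => ψ.1 (constLip X p hp' b) with hΦ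
      by_cases hΦ0 : Φ = 0
      · exact congrFun hΦ0 a
      · have hchar : IsChar p Φ := by
          refine ⟨fun b c => ?_, fun c b => ?_, fun b c => ?_, hΦ0, ?_⟩
          · have : constLip X p hp' (b + c) = constLip X p hp' b + constLip X p hp' c := rfl
            simp only [hΦ, this, ψ.2.1]
          · have : constLip X p hp' (c • b) = c • constLip X p hp' b := rfl
            simp only [hΦ, this, ψ.2.2.1]
          · have : constLip X p hp' (b * c) = constLip X p hp' b * constLip X p hp' c := rfl
            simp only [hΦ, this, ψ.2.2.2.1]
          · obtain ⟨l, C, hC⟩ := ψ.2.2.2.2.2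
            exact ⟨l, C, fun b => by simpa [hΦ, hconst b l] using hC (constLip X p hp' b)⟩
        exact ha ⟨Φ, hchar⟩
    have := hss (constLip X p hp' a) hzero
    have := congrFun (congrArg Subtype.val this) x₀
    exact this
  · -- A semisimple → Lip semisimple
    intro hss f hf
    apply Subtype.ext
    funext x
    apply hss
    intro φ
    exact hf (tensorChar X p hp' x φ)
end

section
/- Let (X,d) be a metric space with at least two elements and (A,(p_l)) a commutative Frechet algebra. Then Lip_d(X,A) is without order if and only if A is without order. -/
open Filter Topology BigOperators

/-! Multiplication in `Lip_d(X, A)` is pointwise and the algebra contains the constant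
functions: an element annihilating `A` gives a constant function annihilating `Lip_d(X, A)`,
and a function annihilated by all constants takes values that annihilate `A`. -/

namespace BSE

variable {X A S : Type*} [NonUnitalCommRing A] [SetLike S (X → A)]
  [NonUnitalSubringClass S (X → A)] {s : S}

theorem isWithoutOrder_of_forall_const_mem [Nonempty X] (hs : ∀ a : A, (fun _ => a) ∈ s)
    (h : IsWithoutOrder s) : IsWithoutOrder A := by
  intro a ha
  have hconst : (⟨fun _ => a, hs a⟩ : s) = 0 :=
    h _ fun g => Subtype.ext <| funext fun x => ha (g.1 x)
  exact congrFun (congrArg Subtype.val hconst) (Classical.arbitrary X)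

theorem IsWithoutOrder.of_forall_const_mem (hs : ∀ a : A, (fun _ => a) ∈ s)
    (h : IsWithoutOrder A) : IsWithoutOrder s := by
  intro f hf
  refine Subtype.ext <| funext fun x => h _ fun b => ?_
  exact congrFun (congrArg Subtype.val (hf ⟨fun _ => b, hs b⟩)) x

theorem isWithoutOrder_iff_of_forall_const_mem [Nonempty X] (hs : ∀ a : A, (fun _ => a) ∈ s) :
    IsWithoutOrder s ↔ IsWithoutOrder A :=
  ⟨isWithoutOrder_of_forall_const_mem hs, IsWithoutOrder.of_forall_const_mem hs⟩

end BSE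

open BSE in
theorem lip_isWithoutOrder_iff_general
    {X : Type*} [MetricSpace X] (hX : ∃ x y : X, x ≠ y)
    {A : Type*} [NonUnitalCommRing A] [Module ℂ A]
    (p : ℕ → A → ℝ) (hp : IsFrechetAlgebra p) :
    IsWithoutOrder ↥(lipSubalgebra X p hp.toIsSeminormFamily) ↔ IsWithoutOrder A := by
  obtain ⟨x, -⟩ := hX
  have : Nonempty X := ⟨x⟩
  exact isWithoutOrder_iff_of_forall_const_mem fun a => (constLip X p hp.toIsSeminormFamily a).2

open BSE in
/-- `Lip_d(X,A)` is without order iff `A` is without order. -/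
theorem lip_isWithoutOrder_iff
    {X : Type*} [MetricSpace X] (hX : ∃ x y : X, x ≠ y)
    {A : Type*} [NonUnitalCommRing A] [Module ℂ A] [SMulCommClass ℂ A A] [IsScalarTower ℂ A A]
    (p : ℕ → A → ℝ) (hp : IsFrechetAlgebra p) :
    IsWithoutOrder ↥(lipSubalgebra X p hp.toIsSeminormFamily) ↔ IsWithoutOrder A :=
  lip_isWithoutOrder_iff_general hX p hp
end

section
/- Let (A,(p_l)) be a commutative semisimple Frechet algebra and (X,d) a metric space with at least two elements. If (f_β) is a bounded Δ-weak approximate identity for Lip_d(X,A), then for every x ∈ X the net (f_β(x)) is a bounded Δ-weak approximate identity for A; in particular, if Lip_d(X,A) has a bounded Δ-weak approximate identity then so does A. -/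
open Filter Topology BigOperators

open BSE in
/-- if `(f_β)` is a bounded Δ-weak approximate identity for `Lip_d(X,A)`, then
for every `x ∈ X` the net `(f_β(x))` is a bounded Δ-weak approximate identity for `A`;
in particular, if `Lip_d(X,A)` has a bounded Δ-weak approximate identity then so does `A`. -/
theorem bddDeltaWeakApproxId_of_lip
    {X : Type*} [MetricSpace X] (hX : ∃ x y : X, x ≠ y)
    {A : Type*} [NonUnitalCommRing A] [Module ℂ A] [SMulCommClass ℂ A A] [IsScalarTower ℂ A A]
    (p : ℕ → A → ℝ) (hp : IsFrechetAlgebra p) (hss : IsSemisimple p) :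
    (∀ (ι : Type) (r : ι → ι → Prop)
        (f : ι → ↥(lipSubalgebra X p hp.toIsSeminormFamily)),
      Nonempty ι →
      (∀ i j : ι, ∃ k, r i k ∧ r j k) →
      (∀ l, ∃ C : ℝ, ∀ i, lipFam X p hp.toIsSeminormFamily l (f i) ≤ C) →
      (∀ ψ : charSpace (lipFam X p hp.toIsSeminormFamily), ∀ ε : ℝ, 0 < ε →
        ∃ i₀, ∀ i, r i₀ i → ‖ψ.1 (f i) - 1‖ ≤ ε) →
      ∀ x : X,
        (∀ l, ∃ C : ℝ, ∀ i, p l ((f i : X → A) x) ≤ C) ∧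
        (∀ φ : charSpace p, ∀ ε : ℝ, 0 < ε →
          ∃ i₀, ∀ i, r i₀ i → ‖φ.1 ((f i : X → A) x) - 1‖ ≤ ε)) ∧
    (HasBddDeltaWeakApproxId (lipFam X p hp.toIsSeminormFamily) →
      HasBddDeltaWeakApproxId p) := by
  have key : ∀ (l : ℕ) (g : ↥(lipSubalgebra X p hp.toIsSeminormFamily)) (x : X),
      p l ((g : X → A) x) ≤ lipFam X p hp.toIsSeminormFamily l g := by
    intro l g x
    obtain ⟨Cb, hCb⟩ := (g.2 l).1
    have h2 : p l ((g : X → A) x) ≤ lipQ p l (g : X → A) :=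
      le_csSup ⟨Cb, by rintro r ⟨y, rfl⟩; exact hCb y⟩ ⟨x, rfl⟩
    have h3 : (0 : ℝ) ≤ lipP p l (g : X → A) := by
      apply Real.sSup_nonneg
      rintro r ⟨y, z, _, rfl⟩
      exact div_nonneg (hp.nonneg l _) dist_nonneg
    simp only [lipFam, lipR]; linarith
  have main : ∀ (ι : Type) (r : ι → ι → Prop)
        (f : ι → ↥(lipSubalgebra X p hp.toIsSeminormFamily)),
      Nonempty ι →
      (∀ i j : ι, ∃ k, r i k ∧ r j k) →
      (∀ l, ∃ C : ℝ, ∀ i, lipFam X p hp.toIsSeminormFamily l (f i) ≤ C) →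
      (∀ ψ : charSpace (lipFam X p hp.toIsSeminormFamily), ∀ ε : ℝ, 0 < ε →
        ∃ i₀, ∀ i, r i₀ i → ‖ψ.1 (f i) - 1‖ ≤ ε) →
      ∀ x : X,
        (∀ l, ∃ C : ℝ, ∀ i, p l ((f i : X → A) x) ≤ C) ∧
        (∀ φ : charSpace p, ∀ ε : ℝ, 0 < ε →
          ∃ i₀, ∀ i, r i₀ i → ‖φ.1 ((f i : X → A) x) - 1‖ ≤ ε) := by
    intro ι r f _ _ hbdd hconv x
    constructor
    · intro l
      obtain ⟨C, hC⟩ := hbdd l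
      exact ⟨C, fun i => le_trans (key l (f i) x) (hC i)⟩
    · intro φ ε hε
      exact hconv (tensorChar X p hp.toIsSeminormFamily x φ) ε hε
  refine ⟨main, ?_⟩
  rintro ⟨ι, r, f, hne, hdir, hbdd, hconv⟩
  obtain ⟨x, -, -⟩ := hX
  obtain ⟨hb, hc⟩ := main ι r f hne hdir hbdd hconv x
  exact ⟨ι, r, fun i => (f i : X → A) x, hne, hdir, hb, hc⟩
end

section
/- Let (X,d) be a metric space with at least two elements, (A,(p_l)) a commutative semisimple Frechet algebra, T a multiplier of Lip_d(X,A), and x₀ ∈ X. Then the map T' : A → A defined by T'(a) = T(f_a)(x₀), where f_a is the constant function with value a, is a multiplier of A, and its associated function satisfies T̂'(φ) = T̂(x₀⊗φ) for all φ ∈ Δ(A). -/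
open Filter Topology BigOperators

open BSE in
/-- if `T` is a multiplier of `Lip_d(X,A)` and `x₀ ∈ X`, then
`T' : a ↦ T(f_a)(x₀)` is a multiplier of `A` and `T̂'(φ) = T̂(x₀⊗φ)` for all `φ ∈ Δ(A)`. -/
theorem multiplier_eval_constLip
    {X : Type*} [MetricSpace X] (hX : ∃ x y : X, x ≠ y)
    {A : Type*} [NonUnitalCommRing A] [Module ℂ A] [SMulCommClass ℂ A A] [IsScalarTower ℂ A A]
    (p : ℕ → A → ℝ) (hp : IsFrechetAlgebra p) (hss : IsSemisimple p)
    (T : ↥(lipSubalgebra X p hp.toIsSeminormFamily) →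
         ↥(lipSubalgebra X p hp.toIsSeminormFamily))
    (hT : IsMultiplier T) (x₀ : X) :
    IsMultiplier (fun a : A =>
      (T (constLip X p hp.toIsSeminormFamily a) : X → A) x₀) ∧
    ∀ σ : charSpace (lipFam X p hp.toIsSeminormFamily) → ℂ,
      IsHatOf (lipFam X p hp.toIsSeminormFamily) T σ →
      IsHatOf p (fun a : A => (T (constLip X p hp.toIsSeminormFamily a) : X → A) x₀)
        (fun φ => σ (tensorChar X p hp.toIsSeminormFamily x₀ φ)) := by
  constructor
  · refine ⟨fun a b => ?_, fun c a => ?_, fun a b => ?_⟩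
    · have h : constLip X p hp.toIsSeminormFamily (a + b)
          = constLip X p hp.toIsSeminormFamily a + constLip X p hp.toIsSeminormFamily b := by
        apply Subtype.ext; rfl
      simp only [h, hT.1]; rfl
    · have h : constLip X p hp.toIsSeminormFamily (c • a)
          = c • constLip X p hp.toIsSeminormFamily a := by
        apply Subtype.ext; rfl
      simp only [h, hT.2.1]; rfl
    · have h : constLip X p hp.toIsSeminormFamily (a * b)
          = constLip X p hp.toIsSeminormFamily a * constLip X p hp.toIsSeminormFamily b := by
        apply Subtype.ext; rfl
      simp only [h, hT.2.2]; rfl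
  · intro σ hσ a φ
    exact hσ (constLip X p hp.toIsSeminormFamily a)
      (tensorChar X p hp.toIsSeminormFamily x₀ φ)
end
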